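/- In a finite MDP with fixed horizon T and true relevance mapping θ (θ(s)=0 implies Q^{π_e}(s,·) is constant in the action), the OSIRIS estimator E_{τ∼π_b}[g(τ) Π_t ρ_t(τ)^{θ(s_t)}] equals V^{π_e}, where g(τ) is the sum of rewards along τ and ρ_t(τ) = π_e(a_t|s_t)/π_b(a_t|s_t). -/

import Mathlib

open Finset

/-- The joint probability of a length-`T` trajectory under policy `π`. -/
def trajProb {S A : Type*} (init : S → ℝ) (P : S → A → S → ℝ) (π : S → A → ℝ)
    (T : ℕ) (s : Fin (T + 1) → S) (a : Fin T → A) : ℝ :=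
  init (s 0) * ∏ t : Fin T, π (s t.castSucc) (a t) * P (s t.castSucc) (a t) (s t.succ)

/-- Value of state `s` under policy `π` with `k` steps remaining (undiscounted). -/
def Vrem {S A : Type*} [Fintype S] [Fintype A]
    (π : S → A → ℝ) (P : S → A → S → ℝ) (R : S → A → ℝ) : ℕ → S → ℝ
  | 0, _ => 0
  | k + 1, s => ∑ a, π s a * (R s a + ∑ s', P s a s' * Vrem π P R k s')

/-- Expected return-to-go after taking action `a` in state `s` with `k` further steps
remaining afterwards (`Q^{π}` with finite horizon). -/
def Qrem {S A : Type*} [Fintype S] [Fintype A]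
    (π : S → A → ℝ) (P : S → A → S → ℝ) (R : S → A → ℝ) (k : ℕ) (s : S) (a : A) : ℝ :=
  R s a + ∑ s', P s a s' * Vrem π P R k s'

/-!
Reweighting a `π_b`-trajectory by `∏_t ρ_t^{θ(s_t)}` turns its probability into the probability
of the same trajectory under the mixed policy that follows `π_e` in relevant states and `π_b` in
irrelevant ones. The expected return of any policy is its finite-horizon value averaged over the
initial distribution, and the mixed policy has the same value function as `π_e`: in an irrelevant
state `Q^{π_e}(s,·)` is constant, so averaging it under `π_b` instead of `π_e` changes nothing.
-/

lemma sum_fun_fin_succ {β M : Type*} [Fintype β] [AddCommMonoid M] (n : ℕ)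
    (F : (Fin (n + 1) → β) → M) :
    ∑ f : Fin (n + 1) → β, F f = ∑ x : β, ∑ f : Fin n → β, F (Fin.cons x f) :=
  calc ∑ f : Fin (n + 1) → β, F f
      = ∑ p : β × (Fin n → β), F (Fin.cons p.1 p.2) :=
        (Fintype.sum_equiv (Fin.consEquiv fun _ => β) _ _ fun _ => rfl).symm
    _ = _ := Fintype.sum_prod_type _

lemma sum_mul_eq_sum_mul_of_const {ι M : Type*} [Fintype ι] [NonAssocSemiring M] [Nontrivial M]
    {w w' f : ι → M}
    (hw : ∑ i, w i = 1) (hw' : ∑ i, w' i = 1) (hf : ∀ i j, f i = f j) :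
    ∑ i, w i * f i = ∑ i, w' i * f i := by
  obtain ⟨i₀⟩ : Nonempty ι := by
    by_contra h
    rw [not_nonempty_iff] at h
    simp at hw
  simp only [hf _ i₀, ← sum_mul, hw, hw']

section Trajectories

variable {S A : Type*}

def mixPolicy (θ : S → Bool) (πe πb : S → A → ℝ) : S → A → ℝ :=
  fun s a => if θ s then πe s a else πb s a

lemma trajProb_mul_prod_ratio (init : S → ℝ) (P : S → A → S → ℝ) {πe πb : S → A → ℝ}
    (hπb : ∀ s a, πb s a ≠ 0) (θ : S → Bool) (T : ℕ) (s : Fin (T + 1) → S) (a : Fin T → A) :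
    trajProb init P πb T s a *
        ∏ t : Fin T,
          (if θ (s t.castSucc) then πe (s t.castSucc) (a t) / πb (s t.castSucc) (a t) else 1)
      = trajProb init P (mixPolicy θ πe πb) T s a := by
  unfold trajProb mixPolicy
  rw [mul_assoc, ← prod_mul_distrib]
  congr 1
  refine prod_congr rfl fun t _ => ?_
  split_ifs
  · field_simp [hπb]
  · rw [mul_one]

lemma trajProb_cons (init : S → ℝ) (P : S → A → S → ℝ) (π : S → A → ℝ)
    (T : ℕ) (s₀ : S) (a₀ : A) (s : Fin (T + 1) → S) (a : Fin T → A) :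
    trajProb init P π (T + 1) (Fin.cons s₀ s) (Fin.cons a₀ a)
      = init s₀ * (π s₀ a₀ * trajProb (P s₀ a₀) P π T s a) := by
  unfold trajProb
  rw [Fin.prod_univ_succ]
  simp only [Fin.castSucc_zero, Fin.cons_zero, Fin.succ_zero_eq_one, ← Fin.succ_castSucc,
    Fin.cons_succ, Fin.cons_one]
  ring

lemma sum_reward_cons (R : S → A → ℝ) (T : ℕ) (s₀ : S) (a₀ : A)
    (s : Fin (T + 1) → S) (a : Fin T → A) :
    ∑ t : Fin (T + 1), R ((Fin.cons s₀ s : Fin (T + 2) → S) t.castSucc)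
        ((Fin.cons a₀ a : Fin (T + 1) → A) t)
      = R s₀ a₀ + ∑ t : Fin T, R (s t.castSucc) (a t) := by
  rw [Fin.sum_univ_succ]
  simp only [Fin.castSucc_zero, Fin.cons_zero, ← Fin.succ_castSucc, Fin.cons_succ]

lemma sum_mixPolicy [Fintype A] {θ : S → Bool} {πe πb : S → A → ℝ}
    (hπe1 : ∀ s, ∑ a, πe s a = 1) (hπb1 : ∀ s, ∑ a, πb s a = 1) (s : S) :
    ∑ a, mixPolicy θ πe πb s a = 1 := by
  unfold mixPolicy
  split_ifs
  exacts [hπe1 s, hπb1 s]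

variable [Fintype S] [Fintype A]

lemma sum_trajProb_succ (init : S → ℝ) (P : S → A → S → ℝ)
    (π : S → A → ℝ) (T : ℕ) (F : (Fin (T + 2) → S) → (Fin (T + 1) → A) → ℝ) :
    ∑ s : Fin (T + 2) → S, ∑ a : Fin (T + 1) → A, trajProb init P π (T + 1) s a * F s a
      = ∑ s₀, init s₀ * ∑ a₀, π s₀ a₀ * ∑ s : Fin (T + 1) → S, ∑ a : Fin T → A,
          trajProb (P s₀ a₀) P π T s a * F (Fin.cons s₀ s) (Fin.cons a₀ a) := by
  rw [sum_fun_fin_succ (β := S) (T + 1)]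
  refine sum_congr rfl fun s₀ _ => ?_
  simp only [sum_fun_fin_succ (β := A) T, trajProb_cons, mul_sum, mul_assoc]
  exact sum_comm

lemma Vrem_succ (π : S → A → ℝ) (P : S → A → S → ℝ) (R : S → A → ℝ)
    (k : ℕ) (s : S) : Vrem π P R (k + 1) s = ∑ a, π s a * Qrem π P R k s a :=
  rfl

variable {P : S → A → S → ℝ} {π : S → A → ℝ}

-- The constant `c` makes the induction go through: after one step it absorbs the first reward.
lemma sum_trajProb_mul_add_return (hP1 : ∀ s a, ∑ s', P s a s' = 1)
    (hπ1 : ∀ s, ∑ a, π s a = 1) (R : S → A → ℝ) (T : ℕ) (init : S → ℝ) (c : ℝ) :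
    ∑ s : Fin (T + 1) → S, ∑ a : Fin T → A,
        trajProb init P π T s a * (c + ∑ t : Fin T, R (s t.castSucc) (a t))
      = ∑ s₀, init s₀ * (c + Vrem π P R T s₀) := by
  induction T generalizing init c with
  | zero => simp [trajProb, Vrem, sum_fun_fin_succ]
  | succ T ih =>
    rw [sum_trajProb_succ]
    refine sum_congr rfl fun s₀ _ => congrArg _ ?_
    simp only [sum_reward_cons, ← add_assoc, ih]
    have hQ : ∀ a, ∑ s₁, P s₀ a s₁ * (c + R s₀ a + Vrem π P R T s₁) = c + Qrem π P R T s₀ a := by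
      intro a
      simp only [Qrem, mul_add, sum_add_distrib, ← sum_mul, hP1, one_mul, add_assoc]
    simp only [hQ, Vrem_succ]
    simp only [mul_add, sum_add_distrib, ← sum_mul, hπ1, one_mul]

lemma sum_trajProb_mul_return (hP1 : ∀ s a, ∑ s', P s a s' = 1)
    (hπ1 : ∀ s, ∑ a, π s a = 1) (R : S → A → ℝ) (T : ℕ) (init : S → ℝ) :
    ∑ s : Fin (T + 1) → S, ∑ a : Fin T → A,
        trajProb init P π T s a * ∑ t : Fin T, R (s t.castSucc) (a t)
      = ∑ s₀, init s₀ * Vrem π P R T s₀ := by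
  simpa using sum_trajProb_mul_add_return hP1 hπ1 R T init 0

lemma Vrem_mixPolicy {R : S → A → ℝ} {πe πb : S → A → ℝ} (hπe1 : ∀ s, ∑ a, πe s a = 1)
    (hπb1 : ∀ s, ∑ a, πb s a = 1) {θ : S → Bool} {T : ℕ}
    (hirrel : ∀ s, θ s = false → ∀ k < T, ∀ a a', Qrem πe P R k s a = Qrem πe P R k s a') :
    ∀ k ≤ T, Vrem (mixPolicy θ πe πb) P R k = Vrem πe P R k
  | 0, _ => rfl
  | k + 1, hk => funext fun s => by
    have hQ : Qrem (mixPolicy θ πe πb) P R k s = Qrem πe P R k s := by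
      unfold Qrem
      rw [Vrem_mixPolicy hπe1 hπb1 hirrel k (by omega)]
    rw [Vrem_succ, Vrem_succ, hQ]
    unfold mixPolicy
    cases hθ : θ s
    · exact sum_mul_eq_sum_mul_of_const (hπb1 s) (hπe1 s) (hirrel s hθ k hk)
    · simp only [if_true]

end Trajectories

theorem osiris_unbiased_general {S A : Type*} [Fintype S] [Fintype A] (T : ℕ)
    (init : S → ℝ) (P : S → A → S → ℝ) (hP1 : ∀ s a, ∑ s', P s a s' = 1)
    (R : S → A → ℝ) (πe πb : S → A → ℝ) (hπe1 : ∀ s, ∑ a, πe s a = 1)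
    (hπb0 : ∀ s a, 0 < πb s a) (hπb1 : ∀ s, ∑ a, πb s a = 1)
    (θ : S → Bool)
    (hirrel : ∀ s, θ s = false → ∀ k < T, ∀ a a', Qrem πe P R k s a = Qrem πe P R k s a') :
    ∑ s : Fin (T + 1) → S, ∑ a : Fin T → A,
        trajProb init P πb T s a *
          ((∑ t : Fin T, R (s t.castSucc) (a t)) *
            ∏ t : Fin T,
              (if θ (s t.castSucc) then πe (s t.castSucc) (a t) / πb (s t.castSucc) (a t)
               else 1))
      = ∑ s : Fin (T + 1) → S, ∑ a : Fin T → A,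
          trajProb init P πe T s a * ∑ t : Fin T, R (s t.castSucc) (a t) := by
  have hπb : ∀ s a, πb s a ≠ 0 := fun s a => (hπb0 s a).ne'
  calc _ = ∑ s : Fin (T + 1) → S, ∑ a : Fin T → A,
          trajProb init P (mixPolicy θ πe πb) T s a * ∑ t : Fin T, R (s t.castSucc) (a t) := by
        refine sum_congr rfl fun s _ => sum_congr rfl fun a _ => ?_
        rw [mul_left_comm, trajProb_mul_prod_ratio init P hπb θ, mul_comm]
    _ = ∑ s₀, init s₀ * Vrem (mixPolicy θ πe πb) P R T s₀ :=
        sum_trajProb_mul_return hP1 (sum_mixPolicy hπe1 hπb1) R T init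
    _ = ∑ s₀, init s₀ * Vrem πe P R T s₀ := by rw [Vrem_mixPolicy hπe1 hπb1 hirrel T le_rfl]
    _ = _ := (sum_trajProb_mul_return hP1 hπe1 R T init).symm

/-- Unbiasedness of OSIRIS with the true relevance mapping: if the return-to-go
`Q^{π_e}(s,·)` is constant in the action for every irrelevant state (`θ s = false`)
at every horizon, then `E_{τ∼π_b}[g(τ) ∏_t ρ_t(τ)^{θ(s_t)}] = V^{π_e} = E_{τ∼π_e}[g(τ)]`,
where `g(τ)` is the sum of rewards along `τ`. -/
theorem osiris_unbiased {S A : Type*} [Fintype S] [Fintype A]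
    [Nonempty S] [Nonempty A] (T : ℕ)
    (init : S → ℝ) (hinit0 : ∀ s, 0 ≤ init s) (hinit1 : ∑ s, init s = 1)
    (P : S → A → S → ℝ) (hP0 : ∀ s a s', 0 ≤ P s a s') (hP1 : ∀ s a, ∑ s', P s a s' = 1)
    (R : S → A → ℝ)
    (πe πb : S → A → ℝ)
    (hπe0 : ∀ s a, 0 ≤ πe s a) (hπe1 : ∀ s, ∑ a, πe s a = 1)
    (hπb0 : ∀ s a, 0 < πb s a) (hπb1 : ∀ s, ∑ a, πb s a = 1)
    (θ : S → Bool)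
    (hirrel : ∀ s, θ s = false → ∀ k < T, ∀ a a', Qrem πe P R k s a = Qrem πe P R k s a') :
    ∑ s : Fin (T + 1) → S, ∑ a : Fin T → A,
        trajProb init P πb T s a *
          ((∑ t : Fin T, R (s t.castSucc) (a t)) *
            ∏ t : Fin T,
              (if θ (s t.castSucc) then πe (s t.castSucc) (a t) / πb (s t.castSucc) (a t)
               else 1))
      = ∑ s : Fin (T + 1) → S, ∑ a : Fin T → A,
          trajProb init P πe T s a * ∑ t : Fin T, R (s t.castSucc) (a t) :=
  osiris_unbiased_general T init P hP1 R πe πb hπe1 hπb0 hπb1 θ hirrel
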